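/- For ω > 0, the 4×4 determinant det [[e^{i√ω t}, i√ω e^{i√ω t}, 1, i√ω], [e^{−i√ω t}, −i√ω e^{−i√ω t}, 1, −i√ω], [1, 0, 1, 0], [t, 1, 0, 1]] equals a nonzero constant multiple of sin(√ω t/2)·(√ω t cos(√ω t/2) − 2 sin(√ω t/2)). -/

import Mathlib

open Complex

/-!
With `z = i√ω` and `E = e^{zt}`, expanding along the row `(1, 0, 1, 0)` and using `E E⁻¹ = 1`
gives `2z(E + E⁻¹ - 2) - z²t(E - E⁻¹)`. The half-angle formulas turn `E + E⁻¹ - 2` into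
`-4 sin²(√ω t/2)` and `E - E⁻¹` into `4i sin(√ω t/2) cos(√ω t/2)`, so the determinant
is `4i√ω` times the stated product.
-/

theorem det_frame_of_mul_eq_one {R : Type*} [CommRing R] (E F z t : R) (hEF : E * F = 1) :
    Matrix.det !![E, z * E, 1, z; F, -z * F, 1, -z; 1, 0, 1, 0; t, 1, 0, 1]
      = 2 * z * (E + F - 2) - z ^ 2 * t * (E - F) := by
  simp [Matrix.det_succ_row_zero, Fin.sum_univ_succ, Fin.succAbove]
  linear_combination (-2 * z) * hEF

theorem exp_I_mul (θ : ℂ) : exp (I * θ) = cos θ + sin θ * I := by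
  rw [mul_comm, exp_mul_I]

theorem exp_neg_I_mul (θ : ℂ) : exp (-(I * θ)) = cos θ - sin θ * I := by
  rw [← mul_neg, mul_comm, exp_mul_I, cos_neg, sin_neg, neg_mul, ← sub_eq_add_neg]

theorem exp_I_mul_add_exp_neg_sub_two (θ : ℂ) :
    exp (I * θ) + exp (-(I * θ)) - 2 = -4 * sin (θ / 2) ^ 2 := by
  have hθ : θ = 2 * (θ / 2) := by ring
  rw [exp_I_mul, exp_neg_I_mul, hθ, mul_div_cancel_left₀ _ two_ne_zero, cos_two_mul]
  linear_combination 4 * sin_sq_add_cos_sq (θ / 2)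

theorem exp_I_mul_sub_exp_neg (θ : ℂ) :
    exp (I * θ) - exp (-(I * θ)) = 4 * I * sin (θ / 2) * cos (θ / 2) := by
  have hθ : θ = 2 * (θ / 2) := by ring
  rw [exp_I_mul, exp_neg_I_mul, hθ, mul_div_cancel_left₀ _ two_ne_zero, sin_two_mul]
  ring

/-- The 4×4 determinant arising from the constant-curvature model Jacobi curve equals a
nonzero constant multiple of `sin(√ω t/2)(√ω t cos(√ω t/2) − 2 sin(√ω t/2))`. -/
theorem model_determinant_eq
    (ω : ℝ) (hω : 0 < ω) :
    ∃ c : ℂ, c ≠ 0 ∧ ∀ t : ℝ,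
      Matrix.det
        !![Complex.exp (I * Real.sqrt ω * t),
            I * Real.sqrt ω * Complex.exp (I * Real.sqrt ω * t), 1, I * Real.sqrt ω;
          Complex.exp (-(I * Real.sqrt ω * t)),
            -(I * Real.sqrt ω) * Complex.exp (-(I * Real.sqrt ω * t)), 1,
            -(I * Real.sqrt ω);
          1, 0, 1, 0;
          (t : ℂ), 1, 0, 1]
        = c * ((Real.sin (Real.sqrt ω * t / 2) *
            (Real.sqrt ω * t * Real.cos (Real.sqrt ω * t / 2)
              - 2 * Real.sin (Real.sqrt ω * t / 2)) : ℝ) : ℂ) := by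
  have hsqrt : (Real.sqrt ω : ℂ) ≠ 0 := ofReal_ne_zero.mpr (Real.sqrt_pos.mpr hω).ne'
  refine ⟨4 * I * Real.sqrt ω, by simp [hsqrt], fun t => ?_⟩
  have harg : I * Real.sqrt ω * t = I * ((Real.sqrt ω * t : ℝ) : ℂ) := by push_cast; ring
  rw [det_frame_of_mul_eq_one _ _ _ _ (by rw [← exp_add, add_neg_cancel, exp_zero]), harg,
    exp_I_mul_add_exp_neg_sub_two, exp_I_mul_sub_exp_neg]
  push_cast
  linear_combination (-4 * I * Real.sqrt ω ^ 2 * t * sin (Real.sqrt ω * t / 2)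
    * cos (Real.sqrt ω * t / 2)) * I_sq
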